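/- arXiv:1506.04781 — 4 statements merged into one kernel-verified Lean document; each statement's English description precedes it below -/
import Mathlib

section
/- Let s0, s1 ∈ ℂ with |s0| = |s1| and s0 + s1 ≠ 0. Then Γ_{s0,s1} = {s ∈ ℂ : Re(s · conj(s0 + s1)) = 0} = i·ℝ·(s0+s1), i.e. the curve is the straight line through the origin orthogonal to s0 + s1. -/
/-!
Expanding `|s ∓ a|² = |s|² + |a|² ∓ 2 Re(s ā)`, the difference of the squared products
`|s - a|²|s - b|² - |s + a|²|s + b|²` equals `-4 (|s|² + |a|²) Re(s (ā + b̄))` once `|a| = |b|`.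
The prefactor is positive for `a ≠ 0`, so `Γ` is the line `Re(s (ā + b̄)) = 0`, and
`Re(s w̄) = 0` says exactly that `s w̄`, hence `s / w`, is purely imaginary.
-/

def Gamma (a b : ℂ) : Set ℂ :=
  {s : ℂ | ‖s - a‖ * ‖s - b‖ =
           ‖s + a‖ * ‖s + b‖}

open Complex hiding Gamma
open ComplexConjugate

lemma normSq_sub_mul_normSq_sub_sub_normSq_add_mul_normSq_add (s a b : ℂ) :
    normSq (s - a) * normSq (s - b) - normSq (s + a) * normSq (s + b) =
      -4 * ((normSq s + normSq b) * (s * conj a).re + (normSq s + normSq a) * (s * conj b).re) := by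
  simp only [normSq_apply, mul_re, sub_re, sub_im, add_re, add_im, conj_re, conj_im]
  ring

lemma mem_Gamma_iff {a b : ℂ} (hab : ‖a‖ = ‖b‖) (ha : a ≠ 0) (s : ℂ) :
    s ∈ Gamma a b ↔ (s * conj (a + b)).re = 0 := by
  have hnormSq : normSq b = normSq a := by rw [← Complex.sq_norm, ← Complex.sq_norm, hab]
  have hpos : 0 < normSq s + normSq a := by
    have := normSq_pos.mpr ha; have := normSq_nonneg s; linarith
  have key : normSq (s - a) * normSq (s - b) - normSq (s + a) * normSq (s + b) =
      -4 * (normSq s + normSq a) * (s * conj (a + b)).re := by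
    rw [normSq_sub_mul_normSq_sub_sub_normSq_add_mul_normSq_add, hnormSq, map_add, mul_add s, add_re]
    ring
  rw [Gamma, Set.mem_ofPred_eq, ← sq_eq_sq₀ (by positivity) (by positivity), mul_pow, mul_pow,
    Complex.sq_norm, Complex.sq_norm, Complex.sq_norm, Complex.sq_norm, ← sub_eq_zero, key]
  simp [hpos.ne']

lemma re_mul_conj_eq_zero_iff {w : ℂ} (hw : w ≠ 0) (s : ℂ) :
    (s * conj w).re = 0 ↔ ∃ t : ℝ, s = I * t * w := by
  constructor
  · intro h
    refine ⟨(s * conj w).im / normSq w, ?_⟩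
    have hsw : s * conj w = I * (s * conj w).im := by
      apply Complex.ext <;> simp [h]
    have hnormSq : (normSq w : ℂ) ≠ 0 := ofReal_ne_zero.mpr (normSq_pos.mpr hw).ne'
    rw [ofReal_div]
    field_simp
    linear_combination w * hsw - s * mul_conj w
  · rintro ⟨t, rfl⟩
    simp only [mul_re, mul_im, I_re, I_im, ofReal_re, ofReal_im, conj_re, conj_im]
    ring

theorem stmt_3 (s0 s1 : ℂ) (habs : ‖s0‖ = ‖s1‖)
    (hsum : s0 + s1 ≠ 0) :
    Gamma s0 s1 = {s : ℂ | (s * starRingEnd ℂ (s0 + s1)).re = 0} ∧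
    Gamma s0 s1 = {s : ℂ | ∃ t : ℝ, s = Complex.I * (t : ℂ) * (s0 + s1)} := by
  have hs0 : s0 ≠ 0 := by
    rintro rfl
    rw [norm_zero, eq_comm, norm_eq_zero] at habs
    simp [habs] at hsum
  have hline : Gamma s0 s1 = {s : ℂ | (s * starRingEnd ℂ (s0 + s1)).re = 0} :=
    Set.ext (mem_Gamma_iff habs hs0)
  exact ⟨hline, hline.trans (Set.ext fun s => re_mul_conj_eq_zero_iff hsum s)⟩
end

section
/- Let s0 ∈ ℂ with Re(s0) ≠ 0. Then Γ_{s0, conj(s0)} = i·ℝ, i.e. the curve determined by the pair (s0, conj(s0)) is exactly the imaginary axis. -/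
/-!
With `P = |s|² + |a|²`, both squared sides of the defining equation of `Γ_{a, ā}` have the form
`(P ∓ 2 Re s Re a)² − 4 (Im s Im a)²`, so they differ by `8 P Re s Re a`. When `Re a ≠ 0` we have
`P > 0`, hence `s ∈ Γ_{a, ā}` exactly when `Re s = 0`.
-/

open Complex hiding Gamma
open ComplexConjugate

theorem normSq_sub_mul_normSq_sub_conj (s a : ℂ) :
    normSq (s - a) * normSq (s - conj a) =
      (normSq s + normSq a - 2 * (s.re * a.re)) ^ 2 - 4 * (s.im * a.im) ^ 2 := by
  simp only [normSq_apply, sub_re, sub_im, conj_re, conj_im]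
  ring

theorem normSq_add_mul_normSq_add_conj (s a : ℂ) :
    normSq (s + a) * normSq (s + conj a) =
      (normSq s + normSq a + 2 * (s.re * a.re)) ^ 2 - 4 * (s.im * a.im) ^ 2 := by
  simpa [sub_neg_eq_add, map_neg] using normSq_sub_mul_normSq_sub_conj s (-a)

theorem mem_Gamma_conj_iff (s a : ℂ) :
    s ∈ Gamma a (conj a) ↔ s.re * a.re * (normSq s + normSq a) = 0 := by
  rw [Gamma, Set.mem_ofPred_eq, ← sq_eq_sq₀ (by positivity) (by positivity), mul_pow, mul_pow]
  simp only [Complex.sq_norm, normSq_sub_mul_normSq_sub_conj, normSq_add_mul_normSq_add_conj]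
  constructor <;> intro h
  · linear_combination (-1 / 8 : ℝ) * h
  · linear_combination (-8 : ℝ) * h

theorem stmt_4 (s0 : ℂ) (h : s0.re ≠ 0) :
    Gamma s0 (starRingEnd ℂ s0) = {s : ℂ | s.re = 0} := by
  ext s
  have hpos : 0 < normSq s + normSq s0 :=
    add_pos_of_nonneg_of_pos (normSq_nonneg s) (normSq_pos.2 (fun h0 => h (by simp [h0])))
  simp [mem_Gamma_conj_iff, h, hpos.ne']
end

section
/- Let s0 = a0 + i·b0 and s1 = a1 + i·b1 be complex numbers satisfying Im(s0 + s1) = b0 + b1 > 0 and |s0|²·b1 + |s1|²·b0 < 0, and set ζ = sqrt(−(|s0|²·b1 + |s1|²·b0)/(b0 + b1)) > 0. Then for every real y (with i·y ∉ {−s0, −s1}): (1) g_{s0,s1}(i·y) < 1 if and only if y ∈ (−ζ, 0) ∪ (ζ, ∞); (2) g_{s0,s1}(i·y) = 1 if and only if y ∈ {0, −ζ, ζ}; (3) g_{s0,s1}(i·y) > 1 if and only if y ∈ (−∞, −ζ) ∪ (0, ζ). -/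
noncomputable def g (s0 s1 s : ℂ) : ℝ :=
  (‖s - s0‖ * ‖s - s1‖) /
    (‖s + s0‖ * ‖s + s1‖)

/-!
On the imaginary axis the sign of `1 - g` is that of the difference of the squared denominator
and numerator, and with `b_j = Im s_j`, `A = |s0|² + y²`, `B = |s1|² + y²` this difference is
`4y(A b1 + B b0) = 4y(b0 + b1)(y² - ζ²)`. Everything then reduces to the sign of the odd cubic
`y (y² - ζ²)`.
-/

open Complex

section Cubic

variable {ζ y : ℝ}

lemma mul_sq_sub_sq_pos_iff (hζ : 0 < ζ) :
    0 < y * (y ^ 2 - ζ ^ 2) ↔ y ∈ Set.Ioo (-ζ) 0 ∨ y ∈ Set.Ioi ζ := by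
  simp only [Set.mem_Ioo, Set.mem_Ioi]
  constructor
  · intro h
    rcases lt_trichotomy y 0 with hy | rfl | hy
    · refine Or.inl ⟨?_, hy⟩
      by_contra! hyζ
      exact (mul_nonpos_of_nonpos_of_nonneg hy.le (by nlinarith)).not_gt h
    · simp at h
    · refine Or.inr ?_
      by_contra! hyζ
      exact (mul_nonpos_of_nonneg_of_nonpos hy.le (by nlinarith)).not_gt h
  · rintro (⟨hζy, hy⟩ | hζy)
    · exact mul_pos_of_neg_of_neg hy (by nlinarith)
    · exact mul_pos (by linarith) (by nlinarith)

lemma mul_sq_sub_sq_eq_zero_iff :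
    y * (y ^ 2 - ζ ^ 2) = 0 ↔ y = 0 ∨ y = -ζ ∨ y = ζ := by
  rw [sq_sub_sq, mul_eq_zero, mul_eq_zero, add_eq_zero_iff_eq_neg, sub_eq_zero]

lemma mul_sq_sub_sq_neg_iff (hζ : 0 < ζ) :
    y * (y ^ 2 - ζ ^ 2) < 0 ↔ y ∈ Set.Iio (-ζ) ∨ y ∈ Set.Ioo 0 ζ := by
  have hodd : -y * ((-y) ^ 2 - ζ ^ 2) = -(y * (y ^ 2 - ζ ^ 2)) := by ring
  rw [← neg_pos, ← hodd, mul_sq_sub_sq_pos_iff hζ, Set.neg_mem_Ioo_iff, neg_zero, neg_neg,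
    Set.mem_Ioi, lt_neg, ← Set.mem_Iio, or_comm]

end Cubic

lemma sign_one_sub_div {N D : ℝ} (hN : 0 ≤ N) (hD : 0 < D) :
    SignType.sign (1 - N / D) = SignType.sign (D ^ 2 - N ^ 2) := by
  have hDN : 0 < D * (D + N) := mul_pos hD (by linarith)
  have h : 1 - N / D = (D ^ 2 - N ^ 2) * (D * (D + N))⁻¹ := by
    field_simp
    ring
  rw [h, sign_mul, sign_pos (inv_pos.2 hDN), mul_one]

lemma norm_sq_I_mul_add_sub_norm_sq_I_mul_sub (s0 s1 : ℂ) (y : ℝ) :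
    ‖I * y + s0‖ ^ 2 * ‖I * y + s1‖ ^ 2 - ‖I * y - s0‖ ^ 2 * ‖I * y - s1‖ ^ 2 =
      4 * (y * ((s0.im + s1.im) * y ^ 2 + (‖s0‖ ^ 2 * s1.im + ‖s1‖ ^ 2 * s0.im))) := by
  simp only [Complex.sq_norm, normSq_apply, add_re, add_im, sub_re, sub_im, mul_re, mul_im,
    I_re, I_im, ofReal_re, ofReal_im]
  ring

lemma sign_one_sub_g_I_mul {s0 s1 : ℂ} {y : ℝ} (hy0 : I * y ≠ -s0) (hy1 : I * y ≠ -s1) :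
    SignType.sign (1 - g s0 s1 (I * y)) =
      SignType.sign (y * ((s0.im + s1.im) * y ^ 2 + (‖s0‖ ^ 2 * s1.im + ‖s1‖ ^ 2 * s0.im))) := by
  have hD : 0 < ‖I * y + s0‖ * ‖I * y + s1‖ :=
    mul_pos (norm_pos_iff.2 fun h => hy0 (eq_neg_of_add_eq_zero_left h))
      (norm_pos_iff.2 fun h => hy1 (eq_neg_of_add_eq_zero_left h))
  rw [g, sign_one_sub_div (by positivity) hD, mul_pow, mul_pow,
    norm_sq_I_mul_add_sub_norm_sq_I_mul_sub, sign_mul, sign_pos (by norm_num : (0 : ℝ) < 4),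
    one_mul]

theorem stmt_5 (s0 s1 : ℂ)
    (hsum : 0 < s0.im + s1.im)
    (hneg : (‖s0‖)^2 * s1.im + (‖s1‖)^2 * s0.im < 0)
    (ζ : ℝ)
    (hζ : ζ = Real.sqrt (-((‖s0‖)^2 * s1.im + (‖s1‖)^2 * s0.im) /
        (s0.im + s1.im)))
    (y : ℝ) (hy0 : Complex.I * y ≠ -s0) (hy1 : Complex.I * y ≠ -s1) :
    (g s0 s1 (Complex.I * y) < 1 ↔ (y ∈ Set.Ioo (-ζ) 0 ∨ y ∈ Set.Ioi ζ)) ∧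
    (g s0 s1 (Complex.I * y) = 1 ↔ (y = 0 ∨ y = -ζ ∨ y = ζ)) ∧
    (1 < g s0 s1 (Complex.I * y) ↔ (y ∈ Set.Iio (-ζ) ∨ y ∈ Set.Ioo 0 ζ)) := by
  have hζsq_pos : 0 < -((‖s0‖)^2 * s1.im + (‖s1‖)^2 * s0.im) / (s0.im + s1.im) :=
    div_pos (neg_pos.2 hneg) hsum
  have hζpos : 0 < ζ := hζ ▸ Real.sqrt_pos.2 hζsq_pos
  have hcubic : y * ((s0.im + s1.im) * y ^ 2 + (‖s0‖ ^ 2 * s1.im + ‖s1‖ ^ 2 * s0.im)) =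
      (s0.im + s1.im) * (y * (y ^ 2 - ζ ^ 2)) := by
    rw [hζ, Real.sq_sqrt hζsq_pos.le]
    field_simp
    ring
  have hsign : SignType.sign (1 - g s0 s1 (I * y)) = SignType.sign (y * (y ^ 2 - ζ ^ 2)) := by
    rw [sign_one_sub_g_I_mul hy0 hy1, hcubic, sign_mul, sign_pos hsum, one_mul]
  refine ⟨?_, ?_, ?_⟩
  · rw [← sub_pos, ← sign_eq_one_iff, hsign, sign_eq_one_iff, mul_sq_sub_sq_pos_iff hζpos]
  · rw [eq_comm, ← sub_eq_zero, ← sign_eq_zero_iff, hsign, sign_eq_zero_iff,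
      mul_sq_sub_sq_eq_zero_iff]
  · rw [← sub_neg, ← sign_eq_neg_one_iff, hsign, sign_eq_neg_one_iff,
      mul_sq_sub_sq_neg_iff hζpos]
end

section
/- Let s0, s1 ∈ ℂ and r ∈ ℝ be such that u(r) := r²(s0+s1) + |s0|²·s1 + |s1|²·s0 ≠ 0, and define γ_{s0,s1}(r) = −i·r·u(r)/|u(r)|. Then γ_{s0,s1}(r) ∈ Γ_{s0,s1}, i.e. |γ(r)−s0|·|γ(r)−s1| = |γ(r)+s0|·|γ(r)+s1|. -/
/-!
Writing `(z ∓ a)(z ∓ b) = P ∓ Q` with `P = z² + ab` and `Q = z(a + b)`, the difference of the squared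
norms of the two products is `-4 Re(P Q̄)`, and `Re(P Q̄) = Re(z̄ · u)` where
`u = |z|²(a + b) + |a|² b + |b|² a`. So `z ∈ Γ_{a,b}` exactly when `z̄ · u(|z|)` is purely imaginary.
The point `γ(r) = -i r u(r)/|u(r)|` has `|γ(r)| = |r|`, and `γ̄ · u(r) = i r |u(r)|` is purely imaginary.
-/

open Complex ComplexConjugate

theorem norm_sq_sub_mul_sub_sub_norm_sq_add_mul_add (z a b : ℂ) :
    ‖(z - a) * (z - b)‖ ^ 2 - ‖(z + a) * (z + b)‖ ^ 2 =
      -4 * (conj z * ((‖z‖ : ℂ) ^ 2 * (a + b) + (‖a‖ : ℂ) ^ 2 * b + (‖b‖ : ℂ) ^ 2 * a)).re := by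
  simp only [← ofReal_pow, Complex.sq_norm, normSq_apply, mul_re, mul_im, add_re, add_im, sub_re,
    sub_im, conj_re, conj_im, ofReal_re, ofReal_im]
  ring

theorem norm_sub_mul_norm_sub_eq_iff (z a b : ℂ) :
    ‖z - a‖ * ‖z - b‖ = ‖z + a‖ * ‖z + b‖ ↔
      (conj z * ((‖z‖ : ℂ) ^ 2 * (a + b) + (‖a‖ : ℂ) ^ 2 * b + (‖b‖ : ℂ) ^ 2 * a)).re = 0 := by
  rw [← norm_mul, ← norm_mul, ← sq_eq_sq₀ (norm_nonneg _) (norm_nonneg _), ← sub_eq_zero,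
    norm_sq_sub_mul_sub_sub_norm_sq_add_mul_add]
  constructor <;> intro h <;> linarith

theorem re_conj_I_mul_ofReal_mul_mul_self (c : ℝ) (u : ℂ) : (conj (I * c * u) * u).re = 0 := by
  simp only [map_mul, conj_I, conj_ofReal, neg_mul, neg_re, mul_re, I_re, ofReal_re, zero_mul,
    I_im, ofReal_im, mul_zero, sub_self, conj_re, mul_im, one_mul, zero_add, conj_im, mul_neg,
    sub_neg_eq_add, neg_zero, neg_sub]
  ring

theorem norm_neg_I_mul_ofReal_mul_div_norm (r : ℝ) {u : ℂ} (hu : u ≠ 0) :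
    ‖-I * r * u / ‖u‖‖ = |r| := by
  simp [hu]

theorem stmt_6 (s0 s1 : ℂ) (r : ℝ)
    (u : ℂ)
    (hu : u = (r : ℂ)^2 * (s0 + s1) + ((‖s0‖ : ℂ))^2 * s1 +
        ((‖s1‖ : ℂ))^2 * s0)
    (hu0 : u ≠ 0)
    (γ : ℂ) (hγ : γ = -Complex.I * (r : ℂ) * u / (‖u‖ : ℂ)) :
    ‖γ - s0‖ * ‖γ - s1‖ =
      ‖γ + s0‖ * ‖γ + s1‖ := by
  have hnorm : (‖γ‖ : ℂ) ^ 2 = (r : ℂ) ^ 2 := by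
    rw [hγ, norm_neg_I_mul_ofReal_mul_div_norm r hu0, ← ofReal_pow, sq_abs, ofReal_pow]
  have hγ_real_multiple : γ = I * ((-r / ‖u‖ : ℝ) : ℂ) * u := by
    rw [hγ]
    push_cast
    ring
  rw [norm_sub_mul_norm_sub_eq_iff, hnorm, ← hu, hγ_real_multiple]
  exact re_conj_I_mul_ofReal_mul_mul_self _ u
end
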